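/- One-step recursion for the soft robust termination gradient (intermediate claim in the proof of Theorem 3): In the setting of the termination function gradient theorem (parameterized family β : ℝ → O → S → ℝ, θ-independent πΩ, πo, K, c, w, value functions (QΩ θ, Qo θ, Qβ θ, VΩ θ) satisfying the rectangular Bellman system for each θ, differentiability of β and QΩ in θ at θ₀), for all s ∈ S and ω ∈ O: ∑_p w p * deriv (θ ↦ QΩ θ s ω p) θ₀ = (∑_a πo ω s a * γ * ∑_{s'} K̄ s a s' * (deriv (θ ↦ β θ ω s') θ₀) * (V̄Ω θ₀ s' − Q̄Ω θ₀ s' ω)) + ∑_{(s',ω')} Pγ θ₀ ((s,ω),(s',ω')) * (∑_{p'} w p' * deriv (θ ↦ QΩ θ s' ω' p') θ₀). -/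

import Mathlib

open scoped Classical

open Finset

variable {S O A P : Type*} [Fintype S] [Fintype O] [Fintype A] [Fintype P]

/-- The average transition kernel `K̄ s a s' = ∑ p, w p * K p s a s'`. -/
noncomputable def Kbar (w : P → ℝ) (K : P → S → A → S → ℝ) (s : S) (a : A) (s' : S) : ℝ :=
  ∑ p, w p * K p s a s'

/-- One-step discounted state–option kernel `Pγ`. -/
noncomputable def Pgam (w : P → ℝ) (K : P → S → A → S → ℝ) (γ : ℝ)
    (πo : O → S → A → ℝ) (β : O → S → ℝ) (πΩ : S → O → ℝ)
    (x y : S × O) : ℝ :=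
  ∑ a, πo x.2 x.1 a * γ * Kbar w K x.1 a y.1 *
    ((1 - β x.2 y.1) * (if y.2 = x.2 then 1 else 0) + β x.2 y.1 * πΩ y.1 y.2)

/-- k-step iterates `Pγ^k` of the one-step discounted state–option kernel. -/
noncomputable def PgamIter (w : P → ℝ) (K : P → S → A → S → ℝ) (γ : ℝ)
    (πo : O → S → A → ℝ) (β : O → S → ℝ) (πΩ : S → O → ℝ) :
    ℕ → S × O → S × O → ℝ
  | 0, x, y => if y = x then 1 else 0
  | (k + 1), x, y => ∑ z, Pgam w K γ πo β πΩ x z * PgamIter w K γ πo β πΩ k z y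

/-!
Averaging over the model parameter commutes with differentiation in `θ`, and by rectangularity
the averaged option values `Q̄Ω` satisfy a Bellman equation driven by the average kernel `K̄`.
Differentiating the averaged continuation value `(1 - β) Q̄Ω + β V̄Ω` by the product rule
produces the explicit term `β' (V̄Ω - Q̄Ω)`, and the remaining derivatives of `Q̄Ω` at the next
state regroup into exactly one step of `Pγ`.
-/

section

variable (w : P → ℝ) (K : P → S → A → S → ℝ) (γ : ℝ)

theorem hasDerivAt_weighted_sum {f : ℝ → P → ℝ} {f' : P → ℝ} {θ₀ : ℝ}
    (hf : ∀ p, HasDerivAt (fun θ => f θ p) (f' p) θ₀) :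
    HasDerivAt (fun θ => ∑ p, w p * f θ p) (∑ p, w p * f' p) θ₀ :=
  HasDerivAt.fun_sum fun p _ => (hf p).const_mul (w p)

theorem hasDerivAt_weighted_continuation (π : O → ℝ) {b : ℝ → ℝ} {b' : ℝ}
    {q : ℝ → O → P → ℝ} {q' : O → P → ℝ} {v qβ : ℝ → P → ℝ} {θ₀ : ℝ} {ω : O}
    (hqβ : ∀ θ p, qβ θ p = (1 - b θ) * q θ ω p + b θ * v θ p)
    (hv : ∀ θ p, v θ p = ∑ ω', π ω' * q θ ω' p)
    (hb : HasDerivAt b b' θ₀) (hq : ∀ ω' p, HasDerivAt (fun θ => q θ ω' p) (q' ω' p) θ₀) :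
    HasDerivAt (fun θ => ∑ p, w p * qβ θ p)
      (b' * ((∑ p, w p * v θ₀ p) - ∑ p, w p * q θ₀ ω p) +
        ((1 - b θ₀) * (∑ p, w p * q' ω p) + b θ₀ * ∑ ω', π ω' * ∑ p, w p * q' ω' p)) θ₀ := by
  have hvq : ∀ θ, ∑ p, w p * v θ p = ∑ ω', π ω' * ∑ p, w p * q θ ω' p := fun θ => by
    simp only [hv, Finset.mul_sum]
    rw [Finset.sum_comm]
    exact Finset.sum_congr rfl fun ω _ => Finset.sum_congr rfl fun p _ => by ring
  have hqβ_avg : ∀ θ, ∑ p, w p * qβ θ p =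
      (1 - b θ) * ∑ p, w p * q θ ω p + b θ * ∑ p, w p * v θ p := fun θ => by
    simp only [hqβ, mul_add, Finset.sum_add_distrib, Finset.mul_sum]
    congr 1 <;> exact Finset.sum_congr rfl fun p _ => by ring
  have hqavg := fun ω' => hasDerivAt_weighted_sum w (hq ω')
  simp only [hqβ_avg, hvq]
  exact (((hb.const_sub 1).mul (hqavg ω)).add
    (hb.mul (HasDerivAt.fun_sum fun ω' _ => (hqavg ω').const_mul (π ω')))).congr_deriv
      (by ring)

theorem weighted_QΩ_eq (c : S → A → ℝ) (πo : S → A → ℝ) {QΩ : S → P → ℝ}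
    {Qo : S → A → P → ℝ} {U : S → ℝ}
    (hQΩ : ∀ s p, QΩ s p = ∑ a, πo s a * Qo s a p)
    (hQo : ∀ s a p, Qo s a p = c s a + γ * ∑ s', K p s a s' * U s') (s : S) :
    ∑ p, w p * QΩ s p = ∑ p, w p * ∑ a, πo s a * c s a +
      ∑ a, πo s a * γ * ∑ s', Kbar w K s a s' * U s' := by
  simp only [hQΩ, hQo, mul_add, Finset.sum_add_distrib, Finset.mul_sum]
  congr 1
  simp only [Kbar, Finset.sum_mul, Finset.mul_sum]
  rw [Finset.sum_comm]
  refine Finset.sum_congr rfl fun a _ => ?_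
  rw [Finset.sum_comm]
  exact Finset.sum_congr rfl fun s' _ => Finset.sum_congr rfl fun p _ => by ring

theorem hasDerivAt_weighted_QΩ (c : S → A → ℝ) (πo : S → A → ℝ) {QΩ : ℝ → S → P → ℝ}
    {Qo : ℝ → S → A → P → ℝ} {U : ℝ → S → ℝ} {U' : S → ℝ} {θ₀ : ℝ}
    (hQΩ : ∀ θ s p, QΩ θ s p = ∑ a, πo s a * Qo θ s a p)
    (hQo : ∀ θ s a p, Qo θ s a p = c s a + γ * ∑ s', K p s a s' * U θ s')
    (hU : ∀ s', HasDerivAt (fun θ => U θ s') (U' s') θ₀) (s : S) :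
    HasDerivAt (fun θ => ∑ p, w p * QΩ θ s p)
      (∑ a, πo s a * γ * ∑ s', Kbar w K s a s' * U' s') θ₀ := by
  simp only [weighted_QΩ_eq w K γ c πo (hQΩ _) (hQo _)]
  refine (HasDerivAt.fun_sum fun a _ => ?_).const_add _
  exact (HasDerivAt.fun_sum fun s' _ => (hU s').const_mul _).const_mul _

theorem sum_Pgam_mul (πo : O → S → A → ℝ) (β : O → S → ℝ) (πΩ : S → O → ℝ) (x : S × O)
    (g : S × O → ℝ) :
    ∑ q, Pgam w K γ πo β πΩ x q * g q =
      ∑ a, πo x.2 x.1 a * γ * ∑ s', Kbar w K x.1 a s' *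
        ((1 - β x.2 s') * g (s', x.2) + β x.2 s' * ∑ ω', πΩ s' ω' * g (s', ω')) := by
  have hmix : ∀ s', ∑ ω',
      ((1 - β x.2 s') * (if ω' = x.2 then 1 else 0) + β x.2 s' * πΩ s' ω') * g (s', ω') =
        (1 - β x.2 s') * g (s', x.2) + β x.2 s' * ∑ ω', πΩ s' ω' * g (s', ω') := by
    intro s'
    simp [add_mul, Finset.sum_add_distrib, Finset.mul_sum, mul_assoc]
  calc ∑ q, Pgam w K γ πo β πΩ x q * g q
      = ∑ s', ∑ a, πo x.2 x.1 a * γ * Kbar w K x.1 a s' * ∑ ω',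
          ((1 - β x.2 s') * (if ω' = x.2 then 1 else 0) + β x.2 s' * πΩ s' ω') * g (s', ω') := by
        simp only [Pgam, Fintype.sum_prod_type, Finset.sum_mul, Finset.mul_sum, mul_assoc]
        exact Finset.sum_congr rfl fun s' _ => Finset.sum_comm
    _ = _ := by
        simp only [hmix, Finset.mul_sum, mul_assoc]
        exact Finset.sum_comm

end

theorem termination_gradient_one_step_general
    (γ : ℝ)
    (c : S → A → ℝ)
    (K : P → S → A → S → ℝ)
    (w : P → ℝ)
    (πΩ : S → O → ℝ)
    (πo : O → S → A → ℝ)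
    (β : ℝ → O → S → ℝ)
    (QΩ : ℝ → S → O → P → ℝ) (Qo : ℝ → S → O → A → P → ℝ)
    (Qβ : ℝ → S → O → P → ℝ) (VΩ : ℝ → S → P → ℝ)
    (hQΩ : ∀ θ s ω p, QΩ θ s ω p = ∑ a, πo ω s a * Qo θ s ω a p)
    (hQo : ∀ θ s ω a p,
      Qo θ s ω a p = c s a + γ * ∑ s', K p s a s' * (∑ p', w p' * Qβ θ s' ω p'))
    (hQβ : ∀ θ s ω p, Qβ θ s ω p = (1 - β θ ω s) * QΩ θ s ω p + β θ ω s * VΩ θ s p)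
    (hVΩ : ∀ θ s p, VΩ θ s p = ∑ ω, πΩ s ω * QΩ θ s ω p)
    (θ₀ : ℝ)
    (hdβ : ∀ ω s, DifferentiableAt ℝ (fun θ => β θ ω s) θ₀)
    (hdQ : ∀ s ω p, DifferentiableAt ℝ (fun θ => QΩ θ s ω p) θ₀) :
    ∀ (s : S) (ω : O),
      ∑ p, w p * deriv (fun θ => QΩ θ s ω p) θ₀ =
        (∑ a, πo ω s a * γ * ∑ s', Kbar w K s a s' *
            deriv (fun θ => β θ ω s') θ₀ *
            ((∑ p, w p * VΩ θ₀ s' p) - (∑ p, w p * QΩ θ₀ s' ω p))) +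
        ∑ q : S × O, Pgam w K γ πo (β θ₀) πΩ (s, ω) q *
          (∑ p', w p' * deriv (fun θ => QΩ θ q.1 q.2 p') θ₀) := by
  intro s ω
  have hcont := fun s' => hasDerivAt_weighted_continuation w (πΩ s')
    (q := fun θ ω p => QΩ θ s' ω p) (hQβ · s' ω) (hVΩ · s') (hdβ ω s').hasDerivAt
    fun ω' p => (hdQ s' ω' p).hasDerivAt
  have hQavg := hasDerivAt_weighted_QΩ w K γ c (πo ω) (QΩ := fun θ s p => QΩ θ s ω p)
    (fun θ s p => hQΩ θ s ω p) (fun θ s a p => hQo θ s ω a p) hcont s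
  rw [← (hasDerivAt_weighted_sum w fun p => (hdQ s ω p).hasDerivAt).deriv, hQavg.deriv,
    sum_Pgam_mul, ← Finset.sum_add_distrib]
  refine Finset.sum_congr rfl fun a _ => ?_
  simp only [Finset.mul_sum, ← Finset.sum_add_distrib]
  exact Finset.sum_congr rfl fun s' _ => by ring

/-- One-step recursion for the soft robust termination gradient
(intermediate claim in the proof of Theorem 3). -/
theorem termination_gradient_one_step
    [Nonempty S] [Nonempty O] [Nonempty A] [Nonempty P]
    (γ : ℝ) (hγ0 : 0 ≤ γ) (hγ1 : γ < 1)
    (c : S → A → ℝ)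
    (K : P → S → A → S → ℝ)
    (hK0 : ∀ p s a s', 0 ≤ K p s a s') (hK1 : ∀ p s a, ∑ s', K p s a s' = 1)
    (w : P → ℝ) (hw0 : ∀ p, 0 ≤ w p) (hw1 : ∑ p, w p = 1)
    (πΩ : S → O → ℝ)
    (hπΩ0 : ∀ s ω, 0 ≤ πΩ s ω) (hπΩ1 : ∀ s, ∑ ω, πΩ s ω = 1)
    (πo : O → S → A → ℝ)
    (hπo0 : ∀ ω s a, 0 ≤ πo ω s a) (hπo1 : ∀ ω s, ∑ a, πo ω s a = 1)
    (β : ℝ → O → S → ℝ) (hβ0 : ∀ θ ω s, 0 ≤ β θ ω s) (hβ1 : ∀ θ ω s, β θ ω s ≤ 1)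
    (QΩ : ℝ → S → O → P → ℝ) (Qo : ℝ → S → O → A → P → ℝ)
    (Qβ : ℝ → S → O → P → ℝ) (VΩ : ℝ → S → P → ℝ)
    (hQΩ : ∀ θ s ω p, QΩ θ s ω p = ∑ a, πo ω s a * Qo θ s ω a p)
    (hQo : ∀ θ s ω a p,
      Qo θ s ω a p = c s a + γ * ∑ s', K p s a s' * (∑ p', w p' * Qβ θ s' ω p'))
    (hQβ : ∀ θ s ω p, Qβ θ s ω p = (1 - β θ ω s) * QΩ θ s ω p + β θ ω s * VΩ θ s p)
    (hVΩ : ∀ θ s p, VΩ θ s p = ∑ ω, πΩ s ω * QΩ θ s ω p)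
    (θ₀ : ℝ)
    (hdβ : ∀ ω s, DifferentiableAt ℝ (fun θ => β θ ω s) θ₀)
    (hdQ : ∀ s ω p, DifferentiableAt ℝ (fun θ => QΩ θ s ω p) θ₀) :
    ∀ (s : S) (ω : O),
      ∑ p, w p * deriv (fun θ => QΩ θ s ω p) θ₀ =
        (∑ a, πo ω s a * γ * ∑ s', Kbar w K s a s' *
            deriv (fun θ => β θ ω s') θ₀ *
            ((∑ p, w p * VΩ θ₀ s' p) - (∑ p, w p * QΩ θ₀ s' ω p))) +
        ∑ q : S × O, Pgam w K γ πo (β θ₀) πΩ (s, ω) q *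
          (∑ p', w p' * deriv (fun θ => QΩ θ q.1 q.2 p') θ₀) :=
  termination_gradient_one_step_general γ c K w πΩ πo β QΩ Qo Qβ VΩ hQΩ hQo hQβ hVΩ θ₀ hdβ hdQ
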